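/- arXiv:2602.18602 — 6 statements merged into one kernel-verified Lean document; each statement's English description precedes it below -/
import Mathlib

section
/- DependencyResolution is NP-hard: for every 3-CNF formula φ with n variables and m clauses, there is a polynomial-time constructible Package Calculus instance (R, Δ, r) such that φ is satisfiable if and only if there exists a valid resolution S ∈ 𝒮(Δ, r). The construction uses a root package r = (q, ε); for each variable x_i, packages (x_i, ⊤) and (x_i, ⊥); and for each clause c_j = l₁ ∨ l₂ ∨ l₃, packages (c_j, l_k) with dependencies (q, ε) Δ (c_j, {l₁, l₂, l₃}) and (c_j, l_k) Δ (var(l_k), {pol(l_k)}). -/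
/-- Core calculus validity: root inclusion, dependency closure, version uniqueness. -/
def ValidRes {A B : Type*} (R : Set (A × B)) (Δ : Set ((A × B) × A × Set B))
    (r : A × B) (S : Set (A × B)) : Prop :=
  S ⊆ R ∧ r ∈ S ∧
    (∀ p ∈ S, ∀ (n : A) (vs : Set B), (p, n, vs) ∈ Δ → ∃ v ∈ vs, (n, v) ∈ S) ∧
    ∀ (n : A) (v v' : B), (n, v) ∈ S → (n, v') ∈ S → v = v'

/-- Package names for the 3-SAT reduction: the root `q`, one name per
variable, and one name per clause. -/
inductive SatName (n m : ℕ) : Type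
  | q : SatName n m
  | var : Fin n → SatName n m
  | clause : Fin m → SatName n m

/-- Versions for the 3-SAT reduction: `ε` for the root, polarities `⊤`/`⊥`
for variable packages, and literals for clause packages. -/
inductive SatVer (n : ℕ) : Type
  | eps : SatVer n
  | pol : Bool → SatVer n
  | lit : Fin n × Bool → SatVer n

/-- A literal `(i, b)` is satisfied by assignment `σ` when `σ i = b`
(`pol` is `⊤ = true` for positive literals, `⊥ = false` for negative ones). -/
def litSat {n : ℕ} (σ : Fin n → Bool) (l : Fin n × Bool) : Prop := σ l.1 = l.2

/-- Repository of the reduction: root `(q, ε)`, variable packages `(xᵢ, ⊤)`,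
`(xᵢ, ⊥)`, and clause packages `(cⱼ, lₖ)` for each literal of clause `j`. -/
def satR {n m : ℕ} (φ : Fin m → (Fin n × Bool) × (Fin n × Bool) × (Fin n × Bool)) :
    Set (SatName n m × SatVer n) :=
  {(SatName.q, SatVer.eps)} ∪
    {p | ∃ (i : Fin n) (b : Bool), p = (SatName.var i, SatVer.pol b)} ∪
    {p | ∃ (j : Fin m), p = (SatName.clause j, SatVer.lit (φ j).1) ∨
      p = (SatName.clause j, SatVer.lit (φ j).2.1) ∨
      p = (SatName.clause j, SatVer.lit (φ j).2.2)}

/-- Dependencies of the reduction: the root depends on each clause name with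
the three literal versions; each clause package `(cⱼ, lₖ)` depends on the
variable of `lₖ` with exactly its polarity. -/
def satΔ {n m : ℕ} (φ : Fin m → (Fin n × Bool) × (Fin n × Bool) × (Fin n × Bool)) :
    Set ((SatName n m × SatVer n) × SatName n m × Set (SatVer n)) :=
  {d | ∃ (j : Fin m), d = ((SatName.q, SatVer.eps), SatName.clause j,
      ({SatVer.lit (φ j).1, SatVer.lit (φ j).2.1, SatVer.lit (φ j).2.2} :
        Set (SatVer n)))} ∪
  {d | ∃ (j : Fin m) (l : Fin n × Bool),
      (l = (φ j).1 ∨ l = (φ j).2.1 ∨ l = (φ j).2.2) ∧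
      d = ((SatName.clause j, SatVer.lit l), SatName.var l.1,
        ({SatVer.pol l.2} : Set (SatVer n)))}

/-- **DependencyResolution is NP-hard**: for every 3-CNF formula `φ` (with
`n` variables and `m` clauses, each clause a disjunction of three literals),
the explicitly (polynomial-size) constructed Package Calculus instance
`(satR φ, satΔ φ, (q, ε))` has a valid resolution iff `φ` is satisfiable. -/
theorem dependencyResolution_NP_hard {n m : ℕ}
    (φ : Fin m → (Fin n × Bool) × (Fin n × Bool) × (Fin n × Bool)) :
    (∃ σ : Fin n → Bool, ∀ j : Fin m,
      litSat σ (φ j).1 ∨ litSat σ (φ j).2.1 ∨ litSat σ (φ j).2.2) ↔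
    ∃ S : Set (SatName n m × SatVer n),
      ValidRes (satR φ) (satΔ φ) (SatName.q, SatVer.eps) S := by
  classical
  constructor
  · rintro ⟨σ, hσ⟩
    have hch : ∀ j : Fin m, ∃ l, (l = (φ j).1 ∨ l = (φ j).2.1 ∨ l = (φ j).2.2) ∧
        litSat σ l := by
      intro j
      rcases hσ j with h | h | h
      exacts [⟨(φ j).1, Or.inl rfl, h⟩, ⟨(φ j).2.1, Or.inr (Or.inl rfl), h⟩,
        ⟨(φ j).2.2, Or.inr (Or.inr rfl), h⟩]
    choose c hc hcs using hch
    refine ⟨{(SatName.q, SatVer.eps)} ∪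
      {p | ∃ i, p = (SatName.var i, SatVer.pol (σ i))} ∪
      {p | ∃ j, p = (SatName.clause j, SatVer.lit (c j))}, ?_, ?_, ?_, ?_⟩
    · rintro p ((h | ⟨i, rfl⟩) | ⟨j, rfl⟩)
      · exact Or.inl (Or.inl h)
      · exact Or.inl (Or.inr ⟨i, σ i, rfl⟩)
      · refine Or.inr ⟨j, ?_⟩
        rcases hc j with h | h | h <;> rw [h]
        exacts [Or.inl rfl, Or.inr (Or.inl rfl), Or.inr (Or.inr rfl)]
    · exact Or.inl (Or.inl rfl)
    · rintro p hp nm vs (⟨j, hd⟩ | ⟨j, l, hl, hd⟩) <;>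
        (injection hd with h1 h2; injection h2 with h2 h3; subst h1 h2 h3)
      · refine ⟨SatVer.lit (c j), ?_, Or.inr ⟨j, rfl⟩⟩
        rcases hc j with h | h | h <;> simp [h]
      · rcases hp with (heq | ⟨i, heq⟩) | ⟨j', heq⟩
        · simp at heq
        · simp at heq
        · obtain ⟨hj, hl'⟩ := Prod.mk.injEq .. ▸ heq
          injection hl' with hl'
          subst hl'
          refine ⟨SatVer.pol (c j').2, rfl, Or.inl (Or.inr ⟨(c j').1, ?_⟩)⟩
          have := hcs j'
          unfold litSat at this
          rw [this]
    · rintro nm v v' ((h | ⟨i, h⟩) | ⟨j, h⟩) ((h' | ⟨i', h'⟩) | ⟨j', h'⟩) <;>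
        simp_all [Prod.mk.injEq]
  · rintro ⟨S, hSR, hroot, hdep, huniq⟩
    refine ⟨fun i => if (SatName.var i, SatVer.pol true) ∈ S then true else false,
      fun j => ?_⟩
    have hvar : ∀ (i : Fin n) (b : Bool), (SatName.var i, SatVer.pol b) ∈ S →
        (if (SatName.var i, SatVer.pol true) ∈ S then true else false) = b := by
      intro i b hb
      cases b with
      | true => simp [hb]
      | false =>
        rw [if_neg]
        intro ht
        have := huniq _ _ _ ht hb
        simp at this
    obtain ⟨v, hv, hvS⟩ := hdep _ hroot (SatName.clause j)
      {SatVer.lit (φ j).1, SatVer.lit (φ j).2.1, SatVer.lit (φ j).2.2}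
      (Or.inl ⟨j, rfl⟩)
    have key : ∀ l, (l = (φ j).1 ∨ l = (φ j).2.1 ∨ l = (φ j).2.2) →
        (SatName.clause j, SatVer.lit l) ∈ S →
        litSat (fun i => if (SatName.var i, SatVer.pol true) ∈ S then true else false) l := by
      intro l hl hlS
      obtain ⟨v', hv', hv'S⟩ := hdep _ hlS (SatName.var l.1) {SatVer.pol l.2}
        (Or.inr ⟨j, l, hl, rfl⟩)
      rcases hv' with rfl
      exact hvar _ _ hv'S
    rcases hv with rfl | rfl | rfl
    · exact Or.inl (key _ (Or.inl rfl) hvS)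
    · exact Or.inr (Or.inl (key _ (Or.inr (Or.inl rfl)) hvS))
    · exact Or.inr (Or.inr (key _ (Or.inr (Or.inr rfl)) hvS))
end

section
/- Version Formula Reduction Correctness: given a Version Formula Calculus instance with repository R_Φ, version-formula dependencies Δ_Φ ⊆ P × (N × Φ), and root r_Φ, define the core instance by R := R_Φ, r := r_Φ, and Δ := { (n,v) Δ (m, ⟦φ⟧_m) | (n,v) Δ_Φ (m, φ) }, where ⟦φ⟧_m evaluates the version formula φ to the set of existing versions of m it denotes. Then a set S is a valid core resolution of (Δ, r) if and only if S is a valid version-formula resolution of (Δ_Φ, r_Φ). -/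
/-- Comparison operators of version formulae. -/
inductive VOp : Type
  | ge | gt | le | lt | eq | ne

/-- Evaluation of a comparison operator under the total order on versions. -/
def VOp.holds {V : Type*} [LinearOrder V] : VOp → V → V → Prop
  | .ge, a, b => a ≥ b
  | .gt, a, b => a > b
  | .le, a, b => a ≤ b
  | .lt, a, b => a < b
  | .eq, a, b => a = b
  | .ne, a, b => a ≠ b

/-- Version formulae: `φ ::= ⊤ | φ ∧ φ | φ ∨ φ | ω c`. -/
inductive VFormula (V : Type*) : Type _
  | top : VFormula V
  | and : VFormula V → VFormula V → VFormula V
  | or : VFormula V → VFormula V → VFormula V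
  | cmp : VOp → V → VFormula V

/-- Semantics `⟦φ⟧ₙ ⊆ V` of a version formula for name `n`, relative to the
set `Vₙ = {v | (n, v) ∈ R_Φ}` of existing versions of `n`. -/
def vsem {N V : Type*} [LinearOrder V] (RΦ : Set (N × V)) (n : N) :
    VFormula V → Set V
  | .top => {v | (n, v) ∈ RΦ}
  | .and φ₁ φ₂ => vsem RΦ n φ₁ ∩ vsem RΦ n φ₂
  | .or φ₁ φ₂ => vsem RΦ n φ₁ ∪ vsem RΦ n φ₂
  | .cmp ω c => {v | (n, v) ∈ RΦ ∧ VOp.holds ω v c}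

/-- Validity of a version-formula resolution: root inclusion, dependency
closure with `⟦φ⟧ₙ` in place of the version set, version uniqueness. -/
def ValidResΦ {N V : Type*} [LinearOrder V] (RΦ : Set (N × V))
    (ΔΦ : Set ((N × V) × N × VFormula V)) (rΦ : N × V) (S : Set (N × V)) : Prop :=
  S ⊆ RΦ ∧ rΦ ∈ S ∧
    (∀ p ∈ S, ∀ (n : N) (φ : VFormula V), (p, n, φ) ∈ ΔΦ →
      ∃ v ∈ vsem RΦ n φ, (n, v) ∈ S) ∧
    ∀ (n : N) (v v' : V), (n, v) ∈ S → (n, v') ∈ S → v = v'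

/-- **Version Formula Reduction Correctness**: evaluating each version formula
to its version set (`Δ := {(p, m, ⟦φ⟧ₘ) | (p, m, φ) ∈ Δ_Φ}`, `R := R_Φ`,
`r := r_Φ`) preserves resolutions in both directions. -/
theorem versionFormulaReduction_correct {N V : Type*} [LinearOrder V]
    (RΦ : Set (N × V)) (ΔΦ : Set ((N × V) × N × VFormula V)) (rΦ : N × V)
    (S : Set (N × V)) :
    ValidRes RΦ
      {d | ∃ (p : N × V) (m : N) (φ : VFormula V), (p, m, φ) ∈ ΔΦ ∧ d = (p, m, vsem RΦ m φ)}
      rΦ S ↔ ValidResΦ RΦ ΔΦ rΦ S := by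
  constructor
  · rintro ⟨hR, hr, hdep, huniq⟩
    refine ⟨hR, hr, ?_, huniq⟩
    intro p hp n φ hφ
    exact hdep p hp n (vsem RΦ n φ) ⟨p, n, φ, hφ, rfl⟩
  · rintro ⟨hR, hr, hdep, huniq⟩
    refine ⟨hR, hr, ?_, huniq⟩
    rintro p hp n vs ⟨q, m, φ, hφ, heq⟩
    obtain ⟨h1, h2, h3⟩ : p = q ∧ n = m ∧ vs = vsem RΦ m φ := by
      simpa [Prod.ext_iff] using heq
    subst h1 h2 h3
    exact hdep p hp n φ hφ
end

section
/- Conflict Reduction Soundness: let (R_Γ, Δ_Γ, Γ, r_Γ) be a Conflict Package Calculus instance and let (R, Δ, r) be its reduction to the core calculus, where for each conflict p Γ (n, vs) we add a fresh synthetic package name ⟨n, vs⟩ with versions 0 and 1 to R, add dependency p Δ (⟨n, vs⟩, {1}), and for each u ∈ vs add dependency (n, u) Δ (⟨n, vs⟩, {0}). If S is a valid core resolution in 𝒮(Δ, r), then S_Γ = S ∩ R_Γ is a valid conflict resolution in 𝒮_Γ(Δ_Γ, Γ, r_Γ). -/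
/-- Validity in the Conflict Package Calculus: a valid core resolution that
additionally avoids all conflicts. -/
def ConflictValid {N V : Type*} (RΓ : Set (N × V))
    (ΔΓ Γ : Set ((N × V) × N × Set V)) (rΓ : N × V) (SΓ : Set (N × V)) : Prop :=
  ValidRes RΓ ΔΓ rΓ SΓ ∧
    ∀ p ∈ SΓ, ∀ (n : N) (vs : Set V), (p, n, vs) ∈ Γ → ∀ v ∈ vs, (n, v) ∉ SΓ

/-- Embedding of original packages into the reduced instance. Synthetic
conflict names `⟨n, vs⟩` live in the right summand, hence are fresh. -/
def embΓ {N V : Type*} (p : N × V) : (N ⊕ (N × Set V)) × (V ⊕ Bool) :=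
  (Sum.inl p.1, Sum.inl p.2)

/-- Reduced repository: the original packages together with, for each conflict
`p Γ (n, vs)`, the two versions `0` (`false`) and `1` (`true`) of the synthetic
name `⟨n, vs⟩`. -/
def RΓred {N V : Type*} (RΓ : Set (N × V)) (Γ : Set ((N × V) × N × Set V)) :
    Set ((N ⊕ (N × Set V)) × (V ⊕ Bool)) :=
  (embΓ '' RΓ) ∪
    {q | ∃ (p : N × V) (n : N) (vs : Set V) (b : Bool),
      (p, n, vs) ∈ Γ ∧ q = (Sum.inr (n, vs), Sum.inr b)}

/-- Reduced dependencies: the original dependencies, plus for each conflict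
`p Γ (n, vs)` a dependency of `p` on `(⟨n, vs⟩, {1})` and of each `(n, u)`
with `u ∈ vs` on `(⟨n, vs⟩, {0})`. -/
def ΔΓred {N V : Type*} (ΔΓ Γ : Set ((N × V) × N × Set V)) :
    Set (((N ⊕ (N × Set V)) × (V ⊕ Bool)) × (N ⊕ (N × Set V)) × Set (V ⊕ Bool)) :=
  {d | ∃ (p : N × V) (m : N) (vs : Set V),
      (p, m, vs) ∈ ΔΓ ∧ d = (embΓ p, Sum.inl m, Sum.inl '' vs)} ∪
  {d | ∃ (p : N × V) (n : N) (vs : Set V),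
      (p, n, vs) ∈ Γ ∧ d = (embΓ p, Sum.inr (n, vs), {Sum.inr true})} ∪
  {d | ∃ (p : N × V) (n : N) (vs : Set V) (u : V),
      (p, n, vs) ∈ Γ ∧ u ∈ vs ∧
      d = (embΓ (n, u), Sum.inr (n, vs), {Sum.inr false})}

/-- **Conflict Reduction Soundness**: if `S` is a valid core resolution of the
reduced instance, then `S_Γ = S ∩ R_Γ` (the original packages of `S`) is a
valid conflict resolution of the original instance. -/
theorem conflictReduction_sound {N V : Type*} (RΓ : Set (N × V))
    (ΔΓ Γ : Set ((N × V) × N × Set V)) (rΓ : N × V)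
    (S : Set ((N ⊕ (N × Set V)) × (V ⊕ Bool)))
    (hS : ValidRes (RΓred RΓ Γ) (ΔΓred ΔΓ Γ) (embΓ rΓ) S) :
    ConflictValid RΓ ΔΓ Γ rΓ {p : N × V | embΓ p ∈ S} := by
  obtain ⟨hsub, hroot, hclos, huniq⟩ := hS
  refine ⟨⟨?_, hroot, ?_, ?_⟩, ?_⟩
  · intro p hp
    rcases hsub hp with ⟨q, hq, heq⟩ | ⟨q, n, vs, b, _, heq⟩
    · have h1 : (Sum.inl q.1 : N ⊕ (N × Set V)) = Sum.inl p.1 := congrArg Prod.fst heq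
      have h2 : (Sum.inl q.2 : V ⊕ Bool) = Sum.inl p.2 := congrArg Prod.snd heq
      have : q = p := Prod.ext (Sum.inl.inj h1) (Sum.inl.inj h2)
      exact this ▸ hq
    · exact absurd (congrArg Prod.fst heq) (by simp [embΓ])
  · intro p hp n vs hd
    have hdep : (embΓ p, Sum.inl n, Sum.inl '' vs) ∈ ΔΓred ΔΓ Γ :=
      Or.inl (Or.inl ⟨p, n, vs, hd, rfl⟩)
    obtain ⟨v, hv, hvS⟩ := hclos _ hp _ _ hdep
    obtain ⟨u, hu, rfl⟩ := hv
    exact ⟨u, hu, hvS⟩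
  · intro n v v' hv hv'
    have := huniq (Sum.inl n) (Sum.inl v) (Sum.inl v') hv hv'
    exact Sum.inl.inj this
  · intro p hp n vs hΓ v hv hnv
    have hdep1 : (embΓ p, Sum.inr (n, vs), ({Sum.inr true} : Set (V ⊕ Bool))) ∈ ΔΓred ΔΓ Γ :=
      Or.inl (Or.inr ⟨p, n, vs, hΓ, rfl⟩)
    have hdep2 : (embΓ (n, v), Sum.inr (n, vs), ({Sum.inr false} : Set (V ⊕ Bool))) ∈ ΔΓred ΔΓ Γ :=
      Or.inr ⟨p, n, vs, v, hΓ, hv, rfl⟩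
    obtain ⟨w, hw, hwS⟩ := hclos _ hp _ _ hdep1
    obtain ⟨w', hw', hw'S⟩ := hclos _ hnv _ _ hdep2
    rw [Set.mem_singleton_iff] at hw hw'
    subst hw hw'
    have := huniq _ _ _ hwS hw'S
    simp at this
end

section
/- Conflict Reduction Completeness: with the conflict reduction as above, if S_Γ is a valid resolution in 𝒮_Γ(Δ_Γ, Γ, r_Γ), then S = S_Γ ∪ { (⟨n, vs⟩, 1) | p Γ (n, vs), p ∈ S_Γ } ∪ { (⟨n, vs⟩, 0) | p Γ (n, vs), (n, u) ∈ S_Γ, u ∈ vs } is a valid core resolution in 𝒮(Δ, r). -/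
/-- **Conflict Reduction Completeness**: if `S_Γ` is a valid conflict
resolution, then augmenting (the embedding of) `S_Γ` with the synthetic
packages `(⟨n, vs⟩, 1)` for conflicts declared by installed packages and
`(⟨n, vs⟩, 0)` for installed packages that are conflicted with yields a valid
core resolution of the reduced instance. -/
theorem conflictReduction_complete {N V : Type*} (RΓ : Set (N × V))
    (ΔΓ Γ : Set ((N × V) × N × Set V)) (rΓ : N × V) (SΓ : Set (N × V))
    (hSΓ : ConflictValid RΓ ΔΓ Γ rΓ SΓ) :
    ValidRes (RΓred RΓ Γ) (ΔΓred ΔΓ Γ) (embΓ rΓ)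
      ((embΓ '' SΓ) ∪
        {q | ∃ (p : N × V) (n : N) (vs : Set V),
          (p, n, vs) ∈ Γ ∧ p ∈ SΓ ∧ q = (Sum.inr (n, vs), Sum.inr true)} ∪
        {q | ∃ (p : N × V) (n : N) (vs : Set V) (u : V),
          (p, n, vs) ∈ Γ ∧ (n, u) ∈ SΓ ∧ u ∈ vs ∧
          q = (Sum.inr (n, vs), Sum.inr false)}) := by
  obtain ⟨⟨hsub, hroot, hdep, huniq⟩, hconf⟩ := hSΓ
  have memS : ∀ p : N × V, p ∈ SΓ →
      embΓ p ∈ ((embΓ '' SΓ) ∪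
        {q | ∃ (p : N × V) (n : N) (vs : Set V),
          (p, n, vs) ∈ Γ ∧ p ∈ SΓ ∧ q = (Sum.inr (n, vs), Sum.inr true)} ∪
        {q | ∃ (p : N × V) (n : N) (vs : Set V) (u : V),
          (p, n, vs) ∈ Γ ∧ (n, u) ∈ SΓ ∧ u ∈ vs ∧
          q = (Sum.inr (n, vs), Sum.inr false)}) :=
    fun p hp => Or.inl (Or.inl ⟨p, hp, rfl⟩)
  have embS : ∀ p : N × V, embΓ p ∈ ((embΓ '' SΓ) ∪
        {q | ∃ (p : N × V) (n : N) (vs : Set V),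
          (p, n, vs) ∈ Γ ∧ p ∈ SΓ ∧ q = (Sum.inr (n, vs), Sum.inr true)} ∪
        {q | ∃ (p : N × V) (n : N) (vs : Set V) (u : V),
          (p, n, vs) ∈ Γ ∧ (n, u) ∈ SΓ ∧ u ∈ vs ∧
          q = (Sum.inr (n, vs), Sum.inr false)}) → p ∈ SΓ := by
    rintro p ((⟨p', hp', he⟩ | ⟨p', n', vs', _, _, he⟩) | ⟨p', n', vs', u', _, _, _, he⟩)
    · have : p' = p := by
        simp only [embΓ, Prod.mk.injEq, Sum.inl.injEq] at he
        exact Prod.ext he.1 he.2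
      exact this ▸ hp'
    · exfalso; simp [embΓ, Prod.mk.injEq] at he
    · exfalso; simp [embΓ, Prod.mk.injEq] at he
  refine ⟨?_, ?_, ?_, ?_⟩
  · rintro q ((⟨p, hp, rfl⟩ | ⟨p, n, vs, hΓ, _, rfl⟩) | ⟨p, n, vs, u, hΓ, _, _, rfl⟩)
    · exact Or.inl ⟨p, hsub hp, rfl⟩
    · exact Or.inr ⟨p, n, vs, true, hΓ, rfl⟩
    · exact Or.inr ⟨p, n, vs, false, hΓ, rfl⟩
  · exact memS rΓ hroot
  · rintro q hq m ws ((⟨p, m', vs, hΔ, heq⟩ | ⟨p, n, vs, hΓ, heq⟩) | ⟨p, n, vs, u, hΓ, hu, heq⟩) <;>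
      simp only [Prod.mk.injEq] at heq <;> obtain ⟨hq1, rfl, rfl⟩ := heq
    · obtain ⟨v, hv, hvS⟩ := hdep p (embS p (hq1 ▸ hq)) m' vs hΔ
      exact ⟨Sum.inl v, ⟨v, hv, rfl⟩, memS (m', v) hvS⟩
    · exact ⟨Sum.inr true, rfl, Or.inl (Or.inr ⟨p, n, vs, hΓ, embS p (hq1 ▸ hq), rfl⟩)⟩
    · exact ⟨Sum.inr false, rfl, Or.inr ⟨p, n, vs, u, hΓ, embS (n, u) (hq1 ▸ hq), hu, rfl⟩⟩
  · rintro m v v' hv hv'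
    rcases hv with ((⟨p, hp, he⟩ | ⟨p, n, vs, hΓ, hpS, he⟩) | ⟨p, n, vs, u, hΓ, hnu, hu, he⟩) <;>
      rcases hv' with ((⟨p', hp', he'⟩ | ⟨p', n', vs', hΓ', hpS', he'⟩) |
        ⟨p', n', vs', u', hΓ', hnu', hu', he'⟩) <;>
      simp only [embΓ, Prod.mk.injEq] at he he' <;>
      obtain ⟨hm, hvv⟩ := he <;> obtain ⟨hm', hvv'⟩ := he'
    · have hname : p.1 = p'.1 := Sum.inl.inj (hm.trans hm'.symm)
      have hver : p.2 = p'.2 := by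
        have hp2 : (p.1, p.2) ∈ SΓ := by simpa using hp
        have hp2' : (p.1, p'.2) ∈ SΓ := by rw [hname]; simpa using hp'
        exact huniq p.1 p.2 p'.2 hp2 hp2'
      rw [← hvv, ← hvv', hver]
    · exact absurd (hm.trans hm') (by simp)
    · exact absurd (hm.trans hm') (by simp)
    · exact absurd (hm'.trans hm) (by simp)
    · rw [hvv, hvv']
    · exfalso
      have h := Sum.inr.inj (hm.symm.trans hm')
      simp only [Prod.mk.injEq] at h
      obtain ⟨rfl, rfl⟩ := h
      exact hconf p hpS n vs hΓ u' hu' hnu'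
    · exact absurd (hm'.trans hm) (by simp)
    · exfalso
      have h := Sum.inr.inj (hm.symm.trans hm')
      simp only [Prod.mk.injEq] at h
      obtain ⟨rfl, rfl⟩ := h
      exact hconf p' hpS' n vs hΓ' u hu hnu
    · rw [hvv, hvv']
end

section
/- Package Formula Reduction Soundness: let (R_Ψ, Δ_Ψ, r_Ψ) be a Package Formula Calculus instance, and let (R, Δ, r) be its core reduction via the encoding function 𝓔: base case 𝓔(p Δ_Ψ (n, vs)) = {p Δ (n, vs)}; conjunction splits into both conjuncts; disjunction ψ_L ∨ ψ_R introduces a fresh two-version package ⟨ψ_L ∨ ψ_R⟩ with p depending on versions {0, 1}, version 0 encoding ψ_L and version 1 encoding ψ_R; negation is pushed inwards by De Morgan's laws and double-negation elimination; negated atoms ¬(n, vs) are encoded as a conflict: p Δ (⟨n, vs⟩, {1}) together with (n, u) Δ (⟨n, vs⟩, {0}) for each u ∈ vs. If S ∈ 𝒮(Δ, r), then S_Ψ = S ∩ R_Ψ is a valid package formula resolution in 𝒮_Ψ(Δ_Ψ, r_Ψ). -/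
/-- Package formulae: `ψ ::= (n, vs) | ψ ∧ ψ | ψ ∨ ψ | ¬ψ`. -/
inductive PFormula (N V : Type*) : Type _
  | atom : N → Set V → PFormula N V
  | and : PFormula N V → PFormula N V → PFormula N V
  | or : PFormula N V → PFormula N V → PFormula N V
  | not : PFormula N V → PFormula N V

/-- Satisfaction `S ⊨ ψ` of a package formula by a set of packages. -/
def PSat {N V : Type*} (S : Set (N × V)) : PFormula N V → Prop
  | .atom n vs => ∃ v ∈ vs, (n, v) ∈ S
  | .and ψL ψR => PSat S ψL ∧ PSat S ψR
  | .or ψL ψR => PSat S ψL ∨ PSat S ψR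
  | .not ψ => ¬ PSat S ψ

/-- Validity in the Package Formula Calculus: root inclusion, formula
closure, and version uniqueness. -/
def PFValid {N V : Type*} (RΨ : Set (N × V))
    (ΔΨ : Set ((N × V) × PFormula N V)) (rΨ : N × V) (SΨ : Set (N × V)) : Prop :=
  SΨ ⊆ RΨ ∧ rΨ ∈ SΨ ∧
    (∀ p ∈ SΨ, ∀ ψ : PFormula N V, (p, ψ) ∈ ΔΨ → PSat SΨ ψ) ∧
    ∀ (n : N) (v v' : V), (n, v) ∈ SΨ → (n, v') ∈ SΨ → v = v'

/-- Names of the reduced instance: original names, fresh disjunction names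
`⟨ψ_L ∨ ψ_R⟩`, and fresh negated-atom (conflict) names `⟨n, vs⟩`. -/
abbrev PFName (N V : Type*) := N ⊕ ((PFormula N V × PFormula N V) ⊕ (N × Set V))

/-- Versions of the reduced instance: original versions plus `0`/`1` for the
synthetic two-version packages (`false` is `0`, `true` is `1`). -/
abbrev PFVer (V : Type*) := V ⊕ Bool

/-- The synthetic disjunction name `⟨ψ_L ∨ ψ_R⟩`. -/
def orName {N V : Type*} (ψL ψR : PFormula N V) : PFName N V :=
  Sum.inr (Sum.inl (ψL, ψR))

/-- The synthetic negated-atom name `⟨n, vs⟩`. -/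
def negAtomName {N V : Type*} (n : N) (vs : Set V) : PFName N V :=
  Sum.inr (Sum.inr (n, vs))

/-- The encoding function `𝓔` of the package formula reduction, in signed
form: `encE p true ψ` encodes `p Δ_Ψ ψ` and `encE p false ψ` encodes
`p Δ_Ψ ¬ψ` (pushing negations inwards by De Morgan's laws and
double-negation elimination). Disjunction introduces a fresh two-version
package, version `0` encoding the left disjunct and `1` the right; negated
atoms are encoded as conflicts via a fresh two-version package. -/
def encE {N V : Type*} :
    PFName N V × PFVer V → Bool → PFormula N V →
      Set ((PFName N V × PFVer V) × PFName N V × Set (PFVer V))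
  | p, true, .atom n vs => {(p, Sum.inl n, Sum.inl '' vs)}
  | p, true, .and ψL ψR => encE p true ψL ∪ encE p true ψR
  | p, true, .or ψL ψR =>
      {(p, orName ψL ψR, {Sum.inr false, Sum.inr true})} ∪
        encE (orName ψL ψR, Sum.inr false) true ψL ∪
        encE (orName ψL ψR, Sum.inr true) true ψR
  | p, true, .not ψ => encE p false ψ
  | p, false, .atom n vs =>
      {(p, negAtomName n vs, {Sum.inr true})} ∪
        {d | ∃ u ∈ vs, d = ((Sum.inl n, Sum.inl u), negAtomName n vs,
          ({Sum.inr false} : Set (PFVer V)))}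
  | p, false, .and ψL ψR =>
      {(p, orName (.not ψL) (.not ψR), {Sum.inr false, Sum.inr true})} ∪
        encE (orName (.not ψL) (.not ψR), Sum.inr false) false ψL ∪
        encE (orName (.not ψL) (.not ψR), Sum.inr true) false ψR
  | p, false, .or ψL ψR => encE p false ψL ∪ encE p false ψR
  | p, false, .not ψ => encE p true ψ
  termination_by _ _ ψ => sizeOf ψ
  decreasing_by all_goals simp_wf <;> omega

/-- Embedding of original packages into the reduced instance. -/
def embΨ {N V : Type*} (p : N × V) : PFName N V × PFVer V :=
  (Sum.inl p.1, Sum.inl p.2)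

/-- Reduced repository: the original packages together with the synthetic
two-version packages. -/
def RΨred {N V : Type*} (RΨ : Set (N × V)) : Set (PFName N V × PFVer V) :=
  (embΨ '' RΨ) ∪
    {q | ∃ (x : (PFormula N V × PFormula N V) ⊕ (N × Set V)) (b : Bool),
      q = (Sum.inr x, Sum.inr b)}

/-- Reduced dependencies: the union of the encodings of all package formula
dependencies. -/
def ΔΨred {N V : Type*} (ΔΨ : Set ((N × V) × PFormula N V)) :
    Set ((PFName N V × PFVer V) × PFName N V × Set (PFVer V)) :=
  {d | ∃ (p : N × V) (ψ : PFormula N V), (p, ψ) ∈ ΔΨ ∧ d ∈ encE (embΨ p) true ψ}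

section CoreCalculus

variable {A B : Type*} {Δ : Set ((A × B) × A × Set B)} {S : Set (A × B)}

def DepClosed (Δ : Set ((A × B) × A × Set B)) (S : Set (A × B)) : Prop :=
  ∀ p ∈ S, ∀ (n : A) (vs : Set B), (p, n, vs) ∈ Δ → ∃ v ∈ vs, (n, v) ∈ S

def VersionUnique (S : Set (A × B)) : Prop :=
  ∀ (n : A) (v v' : B), (n, v) ∈ S → (n, v') ∈ S → v = v'

theorem DepClosed.mem_or_mem_of_dep_pair (hcl : DepClosed Δ S) {q : A × B} {c : A} {a b : B}
    (hq : q ∈ S) (hdep : (q, c, {a, b}) ∈ Δ) : (c, a) ∈ S ∨ (c, b) ∈ S := by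
  obtain ⟨v, rfl | rfl, hv⟩ := hcl q hq c _ hdep
  exacts [.inl hv, .inr hv]

theorem VersionUnique.preimage_prodMap {A' B' : Type*} {f : A' → A} {g : B' → B}
    (hg : Function.Injective g) (huniq : VersionUnique S) :
    VersionUnique {p | Prod.map f g p ∈ S} :=
  fun n _ _ hv hv' => hg (huniq (f n) _ _ hv hv')

theorem DepClosed.false_of_conflict (hcl : DepClosed Δ S) (huniq : VersionUnique S)
    {p q : A × B} {c : A} {t f : B} (htf : t ≠ f) (hp : p ∈ S) (hq : q ∈ S)
    (hpc : (p, c, {t}) ∈ Δ) (hqc : (q, c, {f}) ∈ Δ) : False := by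
  obtain ⟨v, rfl, hv⟩ := hcl p hp c {t} hpc
  obtain ⟨w, rfl, hw⟩ := hcl q hq c {f} hqc
  exact htf (huniq c _ _ hv hw)

end CoreCalculus

section Reduction

variable {N V : Type*} {Δ : Set ((PFName N V × PFVer V) × PFName N V × Set (PFVer V))}
  {S : Set (PFName N V × PFVer V)}

theorem encE_not (q : PFName N V × PFVer V) (b : Bool) (ψ : PFormula N V) :
    encE q b (.not ψ) = encE q (!b) ψ := by
  cases b <;> simp only [encE, Bool.not_true, Bool.not_false]

theorem psat_iff_of_encE_subset (hcl : DepClosed Δ S) (huniq : VersionUnique S) :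
    ∀ (ψ : PFormula N V) (b : Bool) (q : PFName N V × PFVer V), q ∈ S → encE q b ψ ⊆ Δ →
      (PSat {p | embΨ p ∈ S} ψ ↔ b)
  | .atom n vs, true, q, hq, hΔ => by
      simp only [encE, Set.singleton_subset_iff] at hΔ
      obtain ⟨_, ⟨u, hu, rfl⟩, huS⟩ := hcl q hq _ _ hΔ
      exact iff_of_true ⟨u, hu, huS⟩ rfl
  | .atom n vs, false, q, hq, hΔ => by
      simp only [encE, Set.union_subset_iff, Set.singleton_subset_iff, Set.ofPred_subset] at hΔ
      refine iff_of_false ?_ Bool.false_ne_true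
      rintro ⟨u, hu, huS⟩
      exact hcl.false_of_conflict huniq (by simp) hq huS hΔ.1 (hΔ.2 _ ⟨u, hu, rfl⟩)
  | .and ψL ψR, true, q, hq, hΔ => by
      simp only [encE, Set.union_subset_iff] at hΔ
      simp [PSat, psat_iff_of_encE_subset hcl huniq ψL true q hq hΔ.1,
        psat_iff_of_encE_subset hcl huniq ψR true q hq hΔ.2]
  | .and ψL ψR, false, q, hq, hΔ => by
      simp only [encE, Set.union_subset_iff, Set.singleton_subset_iff] at hΔ
      obtain ⟨⟨hpair, hL⟩, hR⟩ := hΔ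
      rcases hcl.mem_or_mem_of_dep_pair hq hpair with h | h
      · simp [PSat, psat_iff_of_encE_subset hcl huniq ψL false _ h hL]
      · simp [PSat, psat_iff_of_encE_subset hcl huniq ψR false _ h hR]
  | .or ψL ψR, true, q, hq, hΔ => by
      simp only [encE, Set.union_subset_iff, Set.singleton_subset_iff] at hΔ
      obtain ⟨⟨hpair, hL⟩, hR⟩ := hΔ
      rcases hcl.mem_or_mem_of_dep_pair hq hpair with h | h
      · simp [PSat, psat_iff_of_encE_subset hcl huniq ψL true _ h hL]
      · simp [PSat, psat_iff_of_encE_subset hcl huniq ψR true _ h hR]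
  | .or ψL ψR, false, q, hq, hΔ => by
      simp only [encE, Set.union_subset_iff] at hΔ
      simp [PSat, psat_iff_of_encE_subset hcl huniq ψL false q hq hΔ.1,
        psat_iff_of_encE_subset hcl huniq ψR false q hq hΔ.2]
  | .not ψ, b, q, hq, hΔ => by
      rw [encE_not] at hΔ
      simp [PSat, psat_iff_of_encE_subset hcl huniq ψ (!b) q hq hΔ]

theorem mem_of_embΨ_mem_RΨred {RΨ : Set (N × V)} {p : N × V} (h : embΨ p ∈ RΨred RΨ) :
    p ∈ RΨ := by
  rcases h with ⟨p', hp', heq⟩ | ⟨_, _, heq⟩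
  · simp only [embΨ, Prod.mk.injEq, Sum.inl.injEq] at heq
    rwa [← Prod.ext heq.1 heq.2]
  · simp [embΨ] at heq

end Reduction

/-- **Package Formula Reduction Soundness**: if `S` is a valid core
resolution of the reduced instance then `S_Ψ = S ∩ R_Ψ` is a valid package
formula resolution. -/
theorem packageFormulaReduction_sound {N V : Type*} (RΨ : Set (N × V))
    (ΔΨ : Set ((N × V) × PFormula N V)) (rΨ : N × V)
    (S : Set (PFName N V × PFVer V))
    (hS : ValidRes (RΨred RΨ) (ΔΨred ΔΨ) (embΨ rΨ) S) :
    PFValid RΨ ΔΨ rΨ {p : N × V | embΨ p ∈ S} := by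
  obtain ⟨hsub, hroot, hcl, huniq⟩ := hS
  refine ⟨fun p hp => mem_of_embΨ_mem_RΨred (hsub hp), hroot, ?_,
    VersionUnique.preimage_prodMap (f := Sum.inl) Sum.inl_injective huniq⟩
  intro p hp ψ hψ
  exact (psat_iff_of_encE_subset hcl huniq ψ true _ hp fun d hd => ⟨p, ψ, hψ, hd⟩).mpr rfl
end

section
/- SAT Encoding Completeness: with the SAT encoding Σ as above, for any valid resolution S ∈ 𝒮(Δ, r), the assignment σ defined by σ(X_p) = ⊤ if and only if p ∈ S satisfies Σ. -/
/-- Satisfaction of the SAT encoding `Σ` by an assignment `σ` of the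
variables `{X_p | p ∈ R}`: the unit clause `X_r`, the dependency clauses
`¬X_p ∨ ⋁_{v ∈ vs} X_{(n,v)}`, and the at-most-one clauses
`¬X_{(n,v)} ∨ ¬X_{(n,v')}` for distinct versions of the same name in `R`. -/
def SatSigma {N V : Type*} (R : Set (N × V)) (Δ : Set ((N × V) × N × Set V))
    (r : N × V) (σ : N × V → Bool) : Prop :=
  σ r = true ∧
    (∀ (p : N × V) (n : N) (vs : Set V), (p, n, vs) ∈ Δ →
      (¬ σ p = true ∨ ∃ v ∈ vs, σ (n, v) = true)) ∧
    ∀ (n : N) (v v' : V), (n, v) ∈ R → (n, v') ∈ R → v ≠ v' →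
      (¬ σ (n, v) = true ∨ ¬ σ (n, v') = true)

/-- **SAT Encoding Completeness**: for any valid resolution
`S ∈ 𝒮(Δ, r)`, the assignment `σ` defined by `σ(X_p) = ⊤ ↔ p ∈ S`
satisfies the encoding `Σ`. -/
theorem satEncoding_complete {N V : Type*} (R : Set (N × V))
    (Δ : Set ((N × V) × N × Set V)) (r : N × V) (S : Set (N × V))
    (hS : ValidRes R Δ r S)
    (σ : N × V → Bool) (hσ : ∀ p : N × V, σ p = true ↔ p ∈ S) :
    SatSigma R Δ r σ := by
  obtain ⟨hsub, hr, hdep, huniq⟩ := hS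
  refine ⟨(hσ r).2 hr, ?_, ?_⟩
  · intro p n vs hΔ
    by_cases hp : σ p = true
    · right
      obtain ⟨v, hv, hvS⟩ := hdep p ((hσ p).1 hp) n vs hΔ
      exact ⟨v, hv, (hσ _).2 hvS⟩
    · exact Or.inl hp
  · intro n v v' _ _ hne
    by_cases h : σ (n, v) = true
    · right
      intro h'
      exact hne (huniq n v v' ((hσ _).1 h) ((hσ _).1 h'))
    · exact Or.inl h
end
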